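/- arXiv:2009.00827 — 7 statements merged into one kernel-verified Lean document; each statement's English description precedes it below -/
import Mathlib

section
/- The bias of the Fattorini estimator is always negative: for X ~ Binomial(n, p) with p ∈ (0,1), E[(n+1)/(X+1)] < 1/p. -/
/-! Since `(n+1)/(k+1) · C(n,k) = C(n+1,k+1)`, multiplying the mean by `p` turns it into the
binomial expansion of `(p + (1-p))^(n+1)` with its `k = 0` term `(1-p)^(n+1)` missing. Hence
`E[(n+1)/(X+1)] = (1 - (1-p)^(n+1)) / p`, which is strictly below `1/p` because `1-p > 0`. -/

open Finset

theorem Nat.cast_add_one_div_add_one_mul_choose {K : Type*} [Field K] [CharZero K] (n k : ℕ) :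
    ((n + 1 : K) / (k + 1)) * n.choose k = (n + 1).choose (k + 1) := by
  rw [div_mul_eq_mul_div, div_eq_iff (Nat.cast_add_one_ne_zero k)]
  exact_mod_cast Nat.add_one_mul_choose_eq n k

theorem sum_range_choose_succ_mul_pow_add_pow {R : Type*} [CommSemiring R] (x y : R) (n : ℕ) :
    ∑ k ∈ range (n + 1), ((n + 1).choose (k + 1) : R) * x ^ (k + 1) * y ^ (n - k)
      + y ^ (n + 1) = (x + y) ^ (n + 1) := by
  rw [add_pow, sum_range_succ' _ (n + 1)]
  congr 1
  · refine sum_congr rfl fun k _ => ?_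
    rw [Nat.add_sub_add_right]
    ring
  · simp

theorem mul_sum_fattorini_eq {K : Type*} [Field K] [CharZero K] (n : ℕ) (p : K) :
    p * ∑ k ∈ range (n + 1), ((n + 1 : K) / (k + 1)) * n.choose k * p ^ k * (1 - p) ^ (n - k)
      = 1 - (1 - p) ^ (n + 1) := by
  have hbinom := sum_range_choose_succ_mul_pow_add_pow p (1 - p) n
  rw [add_sub_cancel, one_pow] at hbinom
  rw [eq_sub_iff_add_eq, mul_sum]
  convert hbinom using 2
  refine sum_congr rfl fun k _ => ?_
  rw [Nat.cast_add_one_div_add_one_mul_choose]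
  ring

theorem fattorini_negative_bias_general (n : ℕ) (p : ℝ) (hp : p ∈ Set.Ioo (0:ℝ) 1) :
    ∑ x ∈ Finset.range (n + 1),
      ((n + 1 : ℝ) / (x + 1)) * (n.choose x : ℝ) * p ^ x * (1 - p) ^ (n - x)
      < 1 / p := by
  obtain ⟨hp0, hp1⟩ := hp
  rw [lt_div_iff₀ hp0, mul_comm, mul_sum_fattorini_eq]
  have : 0 < (1 - p) ^ (n + 1) := pow_pos (sub_pos.mpr hp1) _
  linarith

theorem fattorini_negative_bias (n : ℕ) (hn : 1 ≤ n) (p : ℝ) (hp : p ∈ Set.Ioo (0:ℝ) 1) :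
    ∑ x ∈ Finset.range (n + 1),
      ((n + 1 : ℝ) / (x + 1)) * (n.choose x : ℝ) * p ^ x * (1 - p) ^ (n - x)
      < 1 / p :=
  fattorini_negative_bias_general n p hp
end

section
/- For any finite integer n ≥ 1 and fixed p ∈ (0,1), the function g(c) = Σ_{x=0}^{n} ((n+c)/(x+c)) C(n,x) p^x (1-p)^{n-x} is strictly decreasing in c on (0, ∞). -/
/-! Since `(n + c) / (x + c) = 1 + (n - x) / (x + c)`, every summand is nonincreasing in `c` for
`x ≤ n`, and the `x = 0` summand is strictly decreasing because `n > 0` and its binomial weight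
`(1 - p) ^ n` is positive. -/

open Set

lemma antitoneOn_add_div_add {a b : ℝ} (hab : a ≤ b) :
    AntitoneOn (fun c => (b + c) / (a + c)) (Ioi (-a)) := by
  intro c₁ (hc₁ : -a < c₁) c₂ (hc₂ : -a < c₂) hc
  rw [div_le_div_iff₀ (by linarith) (by linarith)]
  nlinarith

lemma strictAntiOn_add_div_add {a b : ℝ} (hab : a < b) :
    StrictAntiOn (fun c => (b + c) / (a + c)) (Ioi (-a)) := by
  intro c₁ (hc₁ : -a < c₁) c₂ (hc₂ : -a < c₂) hc
  rw [div_lt_div_iff₀ (by linarith) (by linarith)]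
  nlinarith

lemma strictAntiOn_sum_mul {ι α R : Type*} [Preorder α] [Ring R] [PartialOrder R]
    [IsStrictOrderedRing R] {s : Set α} {t : Finset ι} {f : ι → α → R} {w : ι → R}
    (hf : ∀ i ∈ t, AntitoneOn (f i) s) (hw : ∀ i ∈ t, 0 ≤ w i)
    {i₀ : ι} (hi₀ : i₀ ∈ t) (hf₀ : StrictAntiOn (f i₀) s) (hw₀ : 0 < w i₀) :
    StrictAntiOn (fun x => ∑ i ∈ t, f i x * w i) s := by
  intro x hx y hy hxy
  exact Finset.sum_lt_sum
    (fun i hi => mul_le_mul_of_nonneg_right (hf i hi hx hy hxy.le) (hw i hi))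
    ⟨i₀, hi₀, mul_lt_mul_of_pos_right (hf₀ hx hy hxy) hw₀⟩

theorem g_strictAntiOn (n : ℕ) (hn : 1 ≤ n) (p : ℝ) (hp : p ∈ Set.Ioo (0:ℝ) 1) :
    StrictAntiOn (fun c : ℝ => ∑ x ∈ Finset.range (n + 1),
      ((n + c) / (x + c)) * (n.choose x : ℝ) * p ^ x * (1 - p) ^ (n - x))
      (Set.Ioi (0:ℝ)) := by
  obtain ⟨hp₀, hp₁⟩ := hp
  have hq : 0 < 1 - p := sub_pos.2 hp₁
  have hIoi : ∀ x : ℕ, Ioi (0 : ℝ) ⊆ Ioi (-(x : ℝ)) := fun x =>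
    Ioi_subset_Ioi (neg_nonpos.2 x.cast_nonneg)
  have key := strictAntiOn_sum_mul (s := Ioi (0 : ℝ)) (t := Finset.range (n + 1))
    (f := fun x c => (n + c) / ((x : ℝ) + c))
    (w := fun x => n.choose x * (p ^ x * (1 - p) ^ (n - x)))
    (fun x hx =>
      (antitoneOn_add_div_add (by exact_mod_cast Finset.mem_range_succ_iff.1 hx)).mono (hIoi x))
    (fun x _ => by positivity) (Finset.mem_range.2 n.succ_pos)
    ((strictAntiOn_add_div_add (by exact_mod_cast hn)).mono (hIoi 0))
    (by simpa using pow_pos hq n)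
  simpa only [mul_assoc] using key
end

section
/- For any finite integer n ≥ 1 and fixed p ∈ (0,1), the function g(c) = Σ_{x=0}^{n} ((n+c)/(x+c)) C(n,x) p^x (1-p)^{n-x} is strictly convex in c on (0, ∞). -/
/-!
Since `(n + c) / (x + c) = 1 + (n - x) / (x + c)`, every summand is a nonnegative multiple of a
convex function of `c` on `(0, ∞)`, and the summand `x = 0`, namely `(1 - p) ^ n * (n + c) / c`,
is strictly convex because `n ≥ 1` and `p < 1`. A convex sum with one strictly convex term is
strictly convex.
-/

open Set Finset

section

variable {𝕜 E β ι : Type*} [AddCommMonoid E] [AddCommMonoid β] [PartialOrder β]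

theorem StrictConvexOn.smul [CommSemiring 𝕜] [PartialOrder 𝕜] [SMul 𝕜 E] [Module 𝕜 β]
    [PosSMulStrictMono 𝕜 β] {s : Set E} {f : E → β} {c : 𝕜} (hc : 0 < c)
    (hf : StrictConvexOn 𝕜 s f) : StrictConvexOn 𝕜 s fun x => c • f x :=
  ⟨hf.1, fun x hx y hy hxy a b ha hb hab =>
    calc
      c • f (a • x + b • y) < c • (a • f x + b • f y) :=
        smul_lt_smul_of_pos_left (hf.2 hx hy hxy ha hb hab) hc
      _ = a • c • f x + b • c • f y := by rw [smul_add, smul_comm c, smul_comm c]⟩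

variable [Semiring 𝕜] [PartialOrder 𝕜] [SMul 𝕜 E] [IsOrderedCancelAddMonoid β]
  [Module 𝕜 β] {s : Set E} {f : ι → E → β} {t : Finset ι}

theorem ConvexOn.finset_sum (hs : Convex 𝕜 s) (h : ∀ i ∈ t, ConvexOn 𝕜 s (f i)) :
    ConvexOn 𝕜 s fun x => ∑ i ∈ t, f i x := by
  classical
  induction t using Finset.induction with
  | empty => simpa using convexOn_const 0 hs
  | insert j t hj ih =>
    simp only [Finset.sum_insert hj]
    exact (h j (mem_insert_self j t)).add (ih fun i hi => h i (mem_insert_of_mem hi))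

theorem StrictConvexOn.finset_sum_of_mem {i : ι} (hi : i ∈ t)
    (hfi : StrictConvexOn 𝕜 s (f i)) (h : ∀ j ∈ t, ConvexOn 𝕜 s (f j)) :
    StrictConvexOn 𝕜 s fun x => ∑ j ∈ t, f j x := by
  classical
  simp only [← Finset.add_sum_erase t _ hi]
  exact hfi.add_convexOn <|
    ConvexOn.finset_sum hfi.1 fun j hj => h j (mem_of_mem_erase hj)

end

theorem strictConvexOn_inv_add (b : ℝ) : StrictConvexOn ℝ (Ioi (-b)) fun c => (b + c)⁻¹ := by
  have h := (strictConvexOn_zpow (m := -1) (by decide) (by decide)).translate_right b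
  have hpre : (fun c => b + c) ⁻¹' Ioi 0 = Ioi (-b) := by
    ext c
    simp [neg_lt_iff_pos_add]
  rw [hpre] at h
  simpa [Function.comp_def] using h

theorem add_div_add_eq_sub_mul_inv_add_one {a b c : ℝ} (hc : c ∈ Ioi (-b)) :
    (a + c) / (b + c) = (a - b) * (b + c)⁻¹ + 1 := by
  have : b + c ≠ 0 := by linarith [Set.mem_Ioi.1 hc]
  field_simp
  ring

theorem convexOn_add_div_add {a b : ℝ} (hba : b ≤ a) :
    ConvexOn ℝ (Ioi (-b)) fun c => (a + c) / (b + c) :=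
  (((strictConvexOn_inv_add b).convexOn.smul (sub_nonneg.2 hba)).add_const 1).congr
    fun _ hc => (add_div_add_eq_sub_mul_inv_add_one hc).symm

theorem strictConvexOn_add_div_add {a b : ℝ} (hba : b < a) :
    StrictConvexOn ℝ (Ioi (-b)) fun c => (a + c) / (b + c) :=
  (((strictConvexOn_inv_add b).smul (sub_pos.2 hba)).add_const 1).congr
    fun _ hc => (add_div_add_eq_sub_mul_inv_add_one hc).symm

theorem g_strictConvexOn (n : ℕ) (hn : 1 ≤ n) (p : ℝ) (hp : p ∈ Set.Ioo (0:ℝ) 1) :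
    StrictConvexOn ℝ (Set.Ioi (0:ℝ)) (fun c : ℝ => ∑ x ∈ Finset.range (n + 1),
      ((n + c) / (x + c)) * (n.choose x : ℝ) * p ^ x * (1 - p) ^ (n - x)) := by
  obtain ⟨hp0, hp1⟩ := hp
  set w : ℕ → ℝ := fun x => (n.choose x : ℝ) * p ^ x * (1 - p) ^ (n - x)
  have hle : ∀ x ∈ range (n + 1), x ≤ n := fun x hx => Nat.lt_succ_iff.1 (mem_range.1 hx)
  have hw : ∀ x ∈ range (n + 1), 0 < w x := fun x hx => by
    have : 0 < (n.choose x : ℝ) := by exact_mod_cast Nat.choose_pos (hle x hx)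
    have : 0 < 1 - p := sub_pos.2 hp1
    positivity
  have hIoi : ∀ x : ℕ, Ioi (0 : ℝ) ⊆ Ioi (-(x : ℝ)) := fun x =>
    Ioi_subset_Ioi (neg_nonpos.2 x.cast_nonneg)
  have h0 : 0 ∈ range (n + 1) := mem_range.2 n.succ_pos
  have hstrict : StrictConvexOn ℝ (Ioi 0) fun c : ℝ => w 0 • ((n + c) / ((0 : ℕ) + c)) :=
    ((strictConvexOn_add_div_add (Nat.cast_lt.2 hn)).smul (hw 0 h0)).subset (hIoi 0)
      (convex_Ioi 0)
  have hconv :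
      ∀ x ∈ range (n + 1), ConvexOn ℝ (Ioi 0) fun c : ℝ => w x • ((n + c) / (x + c)) :=
    fun x hx => ((convexOn_add_div_add (Nat.cast_le.2 (hle x hx))).smul (hw x hx).le).subset
      (hIoi x) (convex_Ioi 0)
  refine (StrictConvexOn.finset_sum_of_mem h0 hstrict hconv).congr
    fun c _ => sum_congr rfl fun x _ => ?_
  simp only [w, smul_eq_mul]
  ring
end

section
/- For any integer n ≥ 1 and p ∈ (0,1), there exists a unique c ∈ (0, ∞) such that Σ_{x=0}^{n} ((n+c)/(x+c)) C(n,x) p^x (1-p)^{n-x} = 1/p; moreover this unique c lies in (0,1). -/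
/-! For `g(c) = E[(n+c)/(X+c)]`, `p · g(1) = 1 - (1-p)^(n+1)` by the identity
`(n+1)/(x+1) · C(n,x) = C(n+1,x+1)` and the binomial theorem, so `g(1) < 1/p`. Since `g` is continuous and strictly decreasing on `(0, ∞)`
and tends to `∞` at `0+`, the intermediate value theorem gives exactly one root of `g = 1/p`,
and it lies to the left of `1`. -/

open Finset Filter Set Topology

lemma add_div_add_antitoneOn {a x : ℝ} (hx : 0 ≤ x) (hxa : x ≤ a) :
    AntitoneOn (fun c => (a + c) / (x + c)) (Ioi 0) := by
  intro c (hc : 0 < c) c' (hc' : 0 < c') hcc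
  dsimp only
  rw [div_le_div_iff₀ (by positivity) (by positivity)]
  nlinarith

lemma add_div_add_strictAntiOn {a x : ℝ} (hx : 0 ≤ x) (hxa : x < a) :
    StrictAntiOn (fun c => (a + c) / (x + c)) (Ioi 0) := by
  intro c (hc : 0 < c) c' (hc' : 0 < c') hcc
  dsimp only
  rw [div_lt_div_iff₀ (by positivity) (by positivity)]
  nlinarith

noncomputable def binomialRatioMean (n : ℕ) (p c : ℝ) : ℝ :=
  ∑ x ∈ range (n + 1), ((n + c) / (x + c)) * (n.choose x : ℝ) * p ^ x * (1 - p) ^ (n - x)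

section

variable {n : ℕ} {p : ℝ}

lemma binomialRatioMean_strictAntiOn (hn : 1 ≤ n) (hp₀ : 0 ≤ p) (hp₁ : p < 1) :
    StrictAntiOn (binomialRatioMean n p) (Ioi 0) := by
  intro c hc c' hc' hcc
  simp only [binomialRatioMean, mul_assoc]
  apply sum_lt_sum
  · intro x hx
    have hxn : (x : ℝ) ≤ n := by exact_mod_cast Nat.lt_succ_iff.mp (mem_range.mp hx)
    have : 0 ≤ 1 - p := by linarith
    gcongr ?_ * _
    exact add_div_add_antitoneOn x.cast_nonneg hxn hc hc' hcc.le
  · refine ⟨0, mem_range.mpr n.succ_pos, ?_⟩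
    have hn' : (0 : ℝ) < n := by exact_mod_cast hn
    gcongr ?_ * _
    · simp only [Nat.choose_zero_right, Nat.cast_one, pow_zero, Nat.sub_zero, one_mul]
      exact pow_pos (by linarith) n
    · simpa using add_div_add_strictAntiOn le_rfl hn' hc hc' hcc

lemma continuousOn_binomialRatioMean : ContinuousOn (binomialRatioMean n p) (Ioi 0) := by
  refine continuousOn_finsetSum _ fun x _ => ?_
  have hdiv : ContinuousOn (fun c : ℝ => (n + c) / (x + c)) (Ioi 0) :=
    ContinuousOn.div (by fun_prop) (by fun_prop) fun c (hc : 0 < c) => by positivity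
  fun_prop

lemma binomialRatioMean_one_mul : binomialRatioMean n p 1 * p = 1 - (1 - p) ^ (n + 1) := by
  have hchoose (x : ℕ) : ((n : ℝ) + 1) / (x + 1) * n.choose x = (n + 1).choose (x + 1) := by
    rw [div_mul_eq_mul_div, div_eq_iff (by positivity)]
    exact_mod_cast Nat.add_one_mul_choose_eq n x
  have hbinom := add_pow p (1 - p) (n + 1)
  rw [add_sub_cancel, one_pow, sum_range_succ'] at hbinom
  simp only [pow_zero, one_mul, Nat.sub_zero, Nat.choose_zero_right, Nat.cast_one, mul_one,
    Nat.add_sub_add_right] at hbinom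
  have hshift : binomialRatioMean n p 1 * p =
      ∑ x ∈ range (n + 1), p ^ (x + 1) * (1 - p) ^ (n - x) * ((n + 1).choose (x + 1) : ℝ) := by
    rw [binomialRatioMean, sum_mul]
    refine sum_congr rfl fun x _ => ?_
    rw [hchoose]
    ring
  linarith

lemma binomialRatioMean_one_lt (hp₀ : 0 < p) (hp₁ : p < 1) : binomialRatioMean n p 1 < 1 / p := by
  rw [lt_div_iff₀ hp₀, binomialRatioMean_one_mul]
  have : 0 < (1 - p) ^ (n + 1) := pow_pos (by linarith) _
  linarith

lemma first_term_le_binomialRatioMean {c : ℝ} (hc : 0 < c) (hp₀ : 0 ≤ p) (hp₁ : p ≤ 1) :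
    (n + c) / c * (1 - p) ^ n ≤ binomialRatioMean n p c := by
  have hq : 0 ≤ 1 - p := by linarith
  refine le_of_eq_of_le ?_ (single_le_sum (fun x _ => ?_) (mem_range.mpr n.succ_pos))
  · simp
  · positivity

lemma tendsto_binomialRatioMean_nhdsGT_zero (hn : 1 ≤ n) (hp₀ : 0 ≤ p) (hp₁ : p < 1) :
    Tendsto (binomialRatioMean n p) (𝓝[>] 0) atTop := by
  have hpos : 0 < n * (1 - p) ^ n := by
    have : 0 < 1 - p := by linarith
    have : (0 : ℝ) < n := by exact_mod_cast hn
    positivity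
  refine tendsto_atTop_mono' _ ?_ (tendsto_inv_nhdsGT_zero.const_mul_atTop hpos)
  filter_upwards [self_mem_nhdsWithin] with c (hc : 0 < c)
  calc n * (1 - p) ^ n * c⁻¹ ≤ (n + c) / c * (1 - p) ^ n := by
        rw [mul_right_comm, ← div_eq_mul_inv]
        gcongr
        linarith
    _ ≤ binomialRatioMean n p c := first_term_le_binomialRatioMean hc hp₀ hp₁.le

end

theorem g_unique_root_in_unit_interval (n : ℕ) (hn : 1 ≤ n) (p : ℝ)
    (hp : p ∈ Set.Ioo (0:ℝ) 1) :
    (∃! c : ℝ, 0 < c ∧ ∑ x ∈ Finset.range (n + 1),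
        ((n + c) / (x + c)) * (n.choose x : ℝ) * p ^ x * (1 - p) ^ (n - x) = 1 / p) ∧
    (∀ c : ℝ, 0 < c →
      (∑ x ∈ Finset.range (n + 1),
        ((n + c) / (x + c)) * (n.choose x : ℝ) * p ^ x * (1 - p) ^ (n - x) = 1 / p) →
      c < 1) := by
  change (∃! c, 0 < c ∧ binomialRatioMean n p c = 1 / p) ∧
    ∀ c, 0 < c → binomialRatioMean n p c = 1 / p → c < 1
  obtain ⟨hp₀, hp₁⟩ := hp
  have hanti : StrictAntiOn (binomialRatioMean n p) (Ioi 0) :=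
    binomialRatioMean_strictAntiOn hn hp₀.le hp₁
  have hroot_lt_one (c : ℝ) (hc : 0 < c) (hroot : binomialRatioMean n p c = 1 / p) : c < 1 :=
    (hanti.lt_iff_gt (mem_Ioi.mpr one_pos) hc).mp (hroot ▸ binomialRatioMean_one_lt hp₀ hp₁)
  obtain ⟨c₀, hc₀_large, hc₀⟩ := ((tendsto_binomialRatioMean_nhdsGT_zero hn hp₀.le hp₁).eventually
    (eventually_ge_atTop (1 / p))).and (Ioo_mem_nhdsGT one_pos) |>.exists
  obtain ⟨c, hc, hroot⟩ := intermediate_value_Icc' hc₀.2.le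
    (continuousOn_binomialRatioMean.mono fun x hx => hc₀.1.trans_le hx.1)
    ⟨(binomialRatioMean_one_lt hp₀ hp₁).le, hc₀_large⟩
  have hc_pos : 0 < c := hc₀.1.trans_le hc.1
  refine ⟨⟨c, ⟨hc_pos, hroot⟩, fun c' hc' => hanti.injOn hc'.1 hc_pos (hc'.2.trans hroot.symm)⟩,
    hroot_lt_one⟩
end

section
/- For p = 1/2 and any finite integer n ≥ 1, there does not exist a finite c > 0 such that E[(n+2c)/(X+c)] = 2, where X ~ Binomial(n, 1/2). -/
/-!
By strict Jensen for the strictly convex map `t ↦ t⁻¹` on `(0, ∞)`, and since `X` is not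
a.s. constant when `n ≥ 1`, `E[(X + c)⁻¹] > (E[X] + c)⁻¹ = 2 / (n + 2c)`.
Hence `E[(n + 2c) / (X + c)] > 2` for every `c > 0`.
-/

open Finset

lemma inv_sum_mul_lt_sum_mul_inv {ι : Type*} {t : Finset ι} {w p : ι → ℝ}
    (hw : ∀ i ∈ t, 0 < w i) (hw₁ : ∑ i ∈ t, w i = 1) (hp : ∀ i ∈ t, 0 < p i)
    (hne : ∃ j ∈ t, ∃ k ∈ t, p j ≠ p k) :
    (∑ i ∈ t, w i * p i)⁻¹ < ∑ i ∈ t, w i * (p i)⁻¹ := by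
  have hinv := (strictConvexOn_zpow (m := -1) (by norm_num) (by norm_num)).map_sum_lt
    hw hw₁ hp hne
  simpa only [zpow_neg_one, smul_eq_mul] using hinv

lemma sum_range_choose_div_two_pow (n : ℕ) :
    ∑ x ∈ range (n + 1), (n.choose x : ℝ) / 2 ^ n = 1 := by
  rw [← sum_div, ← Nat.cast_sum, Nat.sum_range_choose]
  simp

lemma sum_range_choose_div_two_pow_mul (n : ℕ) :
    ∑ x ∈ range (n + 1), (n.choose x : ℝ) / 2 ^ n * x = n / 2 := by
  have hmean : ∑ x ∈ range (n + 1), (x * n.choose x : ℝ) = n * 2 ^ (n - 1) := by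
    exact_mod_cast Nat.sum_range_mul_choose n
  rcases Nat.eq_zero_or_pos n with rfl | hn
  · simp
  calc ∑ x ∈ range (n + 1), (n.choose x : ℝ) / 2 ^ n * x
      = (∑ x ∈ range (n + 1), (x * n.choose x : ℝ)) / 2 ^ n := by
        rw [sum_div]; congr! 1 with x; ring
    _ = n / 2 := by
        rw [hmean, ← Nat.succ_pred_eq_of_pos hn, pow_succ]
        field_simp
        simp

lemma inv_half_add_lt_sum_range_choose_div_two_pow_mul_inv {n : ℕ} (hn : 1 ≤ n) {c : ℝ}
    (hc : 0 < c) :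
    ((n : ℝ) / 2 + c)⁻¹ < ∑ x ∈ range (n + 1), (n.choose x : ℝ) / 2 ^ n * ((x : ℝ) + c)⁻¹ := by
  have hmean : ∑ x ∈ range (n + 1), (n.choose x : ℝ) / 2 ^ n * ((x : ℝ) + c) = n / 2 + c := by
    simp only [mul_add, sum_add_distrib, ← sum_mul, sum_range_choose_div_two_pow_mul,
      sum_range_choose_div_two_pow, one_mul]
  rw [← hmean]
  refine inv_sum_mul_lt_sum_mul_inv (fun x hx => ?_) (sum_range_choose_div_two_pow n)
    (fun x _ => by positivity) ⟨0, ?_, 1, ?_, by norm_num⟩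
  · have : 0 < n.choose x := Nat.choose_pos (Nat.lt_succ_iff.mp (mem_range.mp hx))
    positivity
  all_goals simp only [mem_range]; omega

theorem no_unbiased_c_at_half (n : ℕ) (hn : 1 ≤ n) :
    ¬ ∃ c : ℝ, 0 < c ∧ ∑ x ∈ Finset.range (n + 1),
      ((n + 2 * c) / (x + c)) * (n.choose x : ℝ) * ((1:ℝ)/2) ^ n = 2 := by
  rintro ⟨c, hc, hsum⟩
  refine hsum.not_gt ?_
  calc (2 : ℝ) = (n + 2 * c) * ((n : ℝ) / 2 + c)⁻¹ := by field_simp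
    _ < (n + 2 * c) * ∑ x ∈ range (n + 1), (n.choose x : ℝ) / 2 ^ n * ((x : ℝ) + c)⁻¹ :=
        mul_lt_mul_of_pos_left (inv_half_add_lt_sum_range_choose_div_two_pow_mul_inv hn hc)
          (by positivity)
    _ = ∑ x ∈ range (n + 1), ((n + 2 * c) / (x + c)) * (n.choose x : ℝ) * ((1:ℝ)/2) ^ n := by
        rw [mul_sum]; congr! 1 with x; rw [one_div_pow]; field_simp
end

section
/- The function h(c) = Σ_{x=0}^{n} ((n+2c)/(x+c)) C(n,x) is strictly decreasing in c on (0, ∞) for any integer n ≥ 1. -/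
/-!
Pairing the terms `x` and `n - x` (which carry the same binomial weight) turns each summand into
`(n + 2c) (1/(x + c) + 1/(n - x + c))`, which equals
`4 + (n - 2x)² / ((x + c)(n - x + c))`.
The denominator grows with `c`, so every paired term is antitone in `c`, and the term `x = 0`,
where `(n - 2x)² = n² > 0`, is strictly decreasing.
-/

open Finset

lemma sum_range_mul_choose_reflect {R : Type*} [Semiring R] (n : ℕ) (f : ℕ → R) :
    ∑ x ∈ range (n + 1), f (n - x) * n.choose x
      = ∑ x ∈ range (n + 1), f x * n.choose x := by
  rw [← sum_range_reflect]
  refine sum_congr rfl fun x hx => ?_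
  have hxn : x ≤ n := Nat.lt_succ_iff.mp (mem_range.mp hx)
  rw [Nat.add_sub_cancel, Nat.sub_sub_self hxn, Nat.choose_symm hxn]

lemma add_div_add_add_add_div_add {p q c : ℝ} (hp : p + c ≠ 0) (hq : q + c ≠ 0) :
    (p + q + 2 * c) / (p + c) + (p + q + 2 * c) / (q + c)
      = 4 + (p - q) ^ 2 / ((p + c) * (q + c)) := by
  field_simp
  ring

lemma antitoneOn_sq_sub_div_mul {p q : ℝ} (hp : 0 ≤ p) (hq : 0 ≤ q) :
    AntitoneOn (fun c => (p - q) ^ 2 / ((p + c) * (q + c))) (Set.Ioi 0) := by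
  intro a ha b hb hab
  have ha : 0 < a := ha
  have hb : 0 < b := hb
  dsimp only
  gcongr

lemma strictAntiOn_sq_sub_div_mul {p q : ℝ} (hp : 0 ≤ p) (hq : 0 ≤ q) (hpq : p ≠ q) :
    StrictAntiOn (fun c => (p - q) ^ 2 / ((p + c) * (q + c))) (Set.Ioi 0) := by
  intro a ha b _ hab
  have ha : 0 < a := ha
  have hpq : 0 < (p - q) ^ 2 := by positivity [sub_ne_zero.mpr hpq]
  exact div_lt_div_of_pos_left hpq (by positivity) (by gcongr)

lemma sum_add_div_add_mul_choose (n : ℕ) {c : ℝ} (hc : 0 < c) :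
    ∑ x ∈ range (n + 1), ((n + 2 * c) / (x + c)) * (n.choose x : ℝ)
      = 2 ^ (n + 1) + (1 / 2) * ∑ x ∈ range (n + 1),
          ((x - (n - x : ℝ)) ^ 2 / ((x + c) * ((n - x : ℝ) + c))) * n.choose x := by
  set h := ∑ x ∈ range (n + 1), ((n + 2 * c) / (x + c)) * (n.choose x : ℝ)
  have hreflect :
      h = ∑ x ∈ range (n + 1), ((n + 2 * c) / ((n - x : ℝ) + c)) * (n.choose x : ℝ) := by
    refine (sum_range_mul_choose_reflect n fun y : ℕ => ((n : ℝ) + 2 * c) / (y + c)).symm.trans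
      (sum_congr rfl fun x hx => ?_)
    rw [Nat.cast_sub (Nat.lt_succ_iff.mp (mem_range.mp hx))]
  have hpair : ∀ x ∈ range (n + 1),
      ((n + 2 * c) / (x + c)) * (n.choose x : ℝ)
          + ((n + 2 * c) / ((n - x : ℝ) + c)) * n.choose x
        = 4 * n.choose x
          + ((x - (n - x : ℝ)) ^ 2 / ((x + c) * ((n - x : ℝ) + c))) * n.choose x := by
    intro x hx
    have hxn : (x : ℝ) ≤ n := by exact_mod_cast Nat.lt_succ_iff.mp (mem_range.mp hx)
    have hsum := add_div_add_add_add_div_add (p := x) (q := n - x) (c := c) (by positivity)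
      (by linarith)
    rw [add_sub_cancel] at hsum
    rw [← add_mul, hsum, add_mul]
  have hchoose : ∑ x ∈ range (n + 1), (n.choose x : ℝ) = 2 ^ n := by
    exact_mod_cast Nat.sum_range_choose n
  have h2 : 2 * h = 4 * 2 ^ n + ∑ x ∈ range (n + 1),
      ((x - (n - x : ℝ)) ^ 2 / ((x + c) * ((n - x : ℝ) + c))) * n.choose x := by
    rw [two_mul]
    nth_rewrite 2 [hreflect]
    rw [← sum_add_distrib, sum_congr rfl hpair, sum_add_distrib, ← mul_sum, hchoose]
  rw [pow_succ]
  linarith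

theorem h_strictAntiOn (n : ℕ) (hn : 1 ≤ n) :
    StrictAntiOn (fun c : ℝ => ∑ x ∈ Finset.range (n + 1),
      ((n + 2 * c) / (x + c)) * (n.choose x : ℝ)) (Set.Ioi (0:ℝ)) := by
  intro a ha b hb hab
  dsimp only
  rw [sum_add_div_add_mul_choose n ha, sum_add_div_add_mul_choose n hb]
  gcongr _ + ?_
  refine mul_lt_mul_of_pos_left (sum_lt_sum (fun x hx => ?_) ⟨0, by simp, ?_⟩) one_half_pos
  · have hxn : (x : ℝ) ≤ n := by exact_mod_cast Nat.lt_succ_iff.mp (mem_range.mp hx)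
    exact mul_le_mul_of_nonneg_right
      (antitoneOn_sq_sub_div_mul (Nat.cast_nonneg x) (sub_nonneg.mpr hxn) ha hb hab.le)
      (Nat.cast_nonneg _)
  · have hn0 : (0 : ℝ) < n := by exact_mod_cast hn
    simpa using strictAntiOn_sq_sub_div_mul le_rfl hn0.le (by simpa using hn0.ne) ha hb hab
end

section
/- For any integer n ≥ 1 and p ∈ (0,1), g(1) = E[(n+1)/(X+1)] < 1/p < lim_{c→0+} g(c) = ∞, where g(c) = E[(n+c)/(X+c)] and X ~ Binomial(n, p); hence the unique root of g(c) = 1/p lies strictly in (0, 1). -/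
/-!
Writing `w x = C(n,x) pˣ (1-p)ⁿ⁻ˣ`, the identity `(n+1)/(x+1) · C(n,x) = C(n+1,x+1)` turns
`p · g(1)` into the binomial distribution of `n + 1` trials without its mass at `0`, so
`p · g(1) = 1 - (1-p)ⁿ⁺¹ < 1`. Each `c ↦ (n+c)/(x+c) = 1 + (n-x)/(x+c)` is antitone,
strictly for `x = 0 < n`, and the `x = 0` term `(n+c)/c · (1-p)ⁿ` blows up as `c → 0⁺`.
By the intermediate value theorem `g = 1/p` has exactly one positive root, and it lies
below `1` since `g(1) < 1/p`.
-/

open Finset Filter Set Topology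

noncomputable def binomWeight (n : ℕ) (p : ℝ) (x : ℕ) : ℝ :=
  n.choose x * p ^ x * (1 - p) ^ (n - x)

lemma binomWeight_pos {n x : ℕ} {p : ℝ} (hp : p ∈ Set.Ioo 0 1) (hx : x ≤ n) :
    0 < binomWeight n p x := by
  have := hp.1
  have := sub_pos.2 hp.2
  have := Nat.choose_pos hx
  unfold binomWeight
  positivity

lemma binomWeight_zero_right (n : ℕ) (p : ℝ) : binomWeight n p 0 = (1 - p) ^ n := by
  simp [binomWeight]

lemma sum_binomWeight (n : ℕ) (p : ℝ) : ∑ x ∈ range (n + 1), binomWeight n p x = 1 := by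
  have h := add_pow p (1 - p) n
  rw [add_sub_cancel, one_pow] at h
  rw [h]
  exact sum_congr rfl fun x _ => by unfold binomWeight; ring

lemma succ_div_succ_mul_choose (n k : ℕ) :
    (n + 1 : ℝ) / (k + 1) * n.choose k = (n + 1).choose (k + 1) := by
  rw [div_mul_eq_mul_div, div_eq_iff (by positivity)]
  exact_mod_cast Nat.add_one_mul_choose_eq n k

lemma mul_succ_div_succ_mul_binomWeight (n x : ℕ) (p : ℝ) :
    p * ((n + 1 : ℝ) / (x + 1) * binomWeight n p x) = binomWeight (n + 1) p (x + 1) := by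
  rw [binomWeight, binomWeight, ← succ_div_succ_mul_choose, Nat.add_sub_add_right, pow_succ]
  ring

lemma mul_sum_succ_div_succ_mul_binomWeight (n : ℕ) (p : ℝ) :
    p * ∑ x ∈ range (n + 1), (n + 1 : ℝ) / (x + 1) * binomWeight n p x
      = 1 - (1 - p) ^ (n + 1) := by
  have h := sum_binomWeight (n + 1) p
  rw [sum_range_succ', binomWeight_zero_right] at h
  rw [mul_sum]
  simp only [mul_succ_div_succ_mul_binomWeight]
  linarith

lemma add_div_add_le_add_div_add {a b c d : ℝ} (ha : 0 ≤ a) (hab : a ≤ b) (hc : 0 < c)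
    (hcd : c ≤ d) : (b + d) / (a + d) ≤ (b + c) / (a + c) := by
  rw [div_le_div_iff₀ (by linarith) (by linarith)]
  nlinarith [mul_nonneg (sub_nonneg.2 hab) (sub_nonneg.2 hcd)]

lemma add_div_add_lt_add_div_add {a b c d : ℝ} (ha : 0 ≤ a) (hab : a < b) (hc : 0 < c)
    (hcd : c < d) : (b + d) / (a + d) < (b + c) / (a + c) := by
  rw [div_lt_div_iff₀ (by linarith) (by linarith)]
  nlinarith [mul_pos (sub_pos.2 hab) (sub_pos.2 hcd)]

/-- The function `g(c) = E[(n + c)/(X + c)]`, `X ∼ Binomial(n, p)`. -/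
noncomputable def ratioMean (n : ℕ) (p c : ℝ) : ℝ :=
  ∑ x ∈ range (n + 1), ((n + c) / (x + c)) * (n.choose x : ℝ) * p ^ x * (1 - p) ^ (n - x)

lemma ratioMean_eq_sum_binomWeight (n : ℕ) (p c : ℝ) :
    ratioMean n p c = ∑ x ∈ range (n + 1), (n + c) / (x + c) * binomWeight n p x := by
  simp only [ratioMean, binomWeight, mul_assoc]

section

variable {n : ℕ} {p : ℝ}

lemma ratioMean_one_lt_one_div (hp : p ∈ Set.Ioo 0 1) : ratioMean n p 1 < 1 / p := by
  rw [lt_div_iff₀' hp.1, ratioMean_eq_sum_binomWeight, mul_sum_succ_div_succ_mul_binomWeight]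
  linarith [pow_pos (sub_pos.2 hp.2) (n + 1)]

lemma ratioMean_strictAntiOn (hn : 1 ≤ n) (hp : p ∈ Set.Ioo 0 1) :
    StrictAntiOn (ratioMean n p) (Ioi 0) := by
  intro a (ha : 0 < a) b _ hab
  simp only [ratioMean_eq_sum_binomWeight]
  apply sum_lt_sum
  · intro x hx
    have hxn : x ≤ n := Nat.lt_succ_iff.1 (mem_range.1 hx)
    exact mul_le_mul_of_nonneg_right
      (add_div_add_le_add_div_add x.cast_nonneg (by exact_mod_cast hxn) ha hab.le)
      (binomWeight_pos hp hxn).le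
  · refine ⟨0, mem_range.2 n.succ_pos,
      mul_lt_mul_of_pos_right ?_ (binomWeight_pos hp n.zero_le)⟩
    exact add_div_add_lt_add_div_add (by simp) (by exact_mod_cast hn) ha hab

lemma ratioMean_continuousOn : ContinuousOn (ratioMean n p) (Ioi 0) := by
  unfold ratioMean
  refine continuousOn_finsetSum _ fun x _ => ?_
  refine ContinuousOn.mul (ContinuousOn.mul (ContinuousOn.mul ?_ continuousOn_const)
    continuousOn_const) continuousOn_const
  exact ContinuousOn.div (by fun_prop) (by fun_prop)
    fun c (hc : 0 < c) => by positivity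

lemma tendsto_ratioMean_nhdsGT_zero (hn : 1 ≤ n) (hp : p ∈ Set.Ioo 0 1) :
    Tendsto (ratioMean n p) (𝓝[>] 0) atTop := by
  have hw₀ := binomWeight_pos hp n.zero_le
  have hnw₀ : 0 < n * binomWeight n p 0 := mul_pos (by exact_mod_cast hn) hw₀
  refine tendsto_atTop_mono' _ ?_ (tendsto_inv_nhdsGT_zero.const_mul_atTop hnw₀)
  filter_upwards [self_mem_nhdsWithin] with c (hc : 0 < c)
  calc n * binomWeight n p 0 * c⁻¹ ≤ (n + c) / ((0 : ℕ) + c) * binomWeight n p 0 := by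
        rw [Nat.cast_zero, zero_add, mul_right_comm, ← div_eq_mul_inv]
        exact mul_le_mul_of_nonneg_right (div_le_div_of_nonneg_right (by linarith) hc.le) hw₀.le
    _ ≤ ratioMean n p c := by
        rw [ratioMean_eq_sum_binomWeight]
        refine single_le_sum (f := fun x : ℕ => (n + c) / (x + c) * binomWeight n p x)
          (fun x hx => ?_) (mem_range.2 n.succ_pos)
        have := binomWeight_pos hp (Nat.lt_succ_iff.1 (mem_range.1 hx))
        positivity

end

lemma existsUnique_pos_eq_of_strictAntiOn_Ioi {f : ℝ → ℝ} {b y : ℝ} (hb : 0 < b)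
    (hcont : ContinuousOn f (Ioi 0)) (hanti : StrictAntiOn f (Ioi 0))
    (hlim : Tendsto f (𝓝[>] 0) atTop) (hfb : f b < y) : ∃! c, 0 < c ∧ f c = y := by
  obtain ⟨c₀, hyc₀, hc₀, hc₀b⟩ :=
    ((hlim.eventually_ge_atTop y).and (Ioo_mem_nhdsGT hb)).exists
  have hsub : Icc c₀ b ⊆ Ioi 0 := fun x hx => hc₀.trans_le hx.1
  obtain ⟨c, hc, hfc⟩ := intermediate_value_Icc' hc₀b.le (hcont.mono hsub) ⟨hfb.le, hyc₀⟩
  exact ⟨c, ⟨hsub hc, hfc⟩, fun d ⟨hd, hfd⟩ =>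
    hanti.injOn (mem_Ioi.2 hd) (hsub hc) (hfd.trans hfc.symm)⟩

theorem root_strictly_between_zero_one (n : ℕ) (hn : 1 ≤ n) (p : ℝ)
    (hp : p ∈ Set.Ioo (0:ℝ) 1) :
    (∑ x ∈ Finset.range (n + 1),
        ((n + 1 : ℝ) / (x + 1)) * (n.choose x : ℝ) * p ^ x * (1 - p) ^ (n - x) < 1 / p) ∧
    Filter.Tendsto (fun c : ℝ => ∑ x ∈ Finset.range (n + 1),
        ((n + c) / (x + c)) * (n.choose x : ℝ) * p ^ x * (1 - p) ^ (n - x))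
      (nhdsWithin 0 (Set.Ioi 0)) Filter.atTop ∧
    (∃! c : ℝ, 0 < c ∧ ∑ x ∈ Finset.range (n + 1),
        ((n + c) / (x + c)) * (n.choose x : ℝ) * p ^ x * (1 - p) ^ (n - x) = 1 / p) ∧
    (∀ c : ℝ, 0 < c →
      (∑ x ∈ Finset.range (n + 1),
        ((n + c) / (x + c)) * (n.choose x : ℝ) * p ^ x * (1 - p) ^ (n - x) = 1 / p) →
      c < 1) := by
  have h₁ : ratioMean n p 1 < 1 / p := ratioMean_one_lt_one_div hp
  have hanti := ratioMean_strictAntiOn hn hp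
  have hlim := tendsto_ratioMean_nhdsGT_zero hn hp
  refine ⟨h₁, hlim,
    existsUnique_pos_eq_of_strictAntiOn_Ioi one_pos ratioMean_continuousOn hanti hlim h₁,
    fun c hc hgc => ?_⟩
  exact (hanti.lt_iff_gt (mem_Ioi.2 one_pos) (mem_Ioi.2 hc)).1 (h₁.trans_eq hgc.symm)
end
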